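/- arXiv:2408.07227 — 2 statements merged into one kernel-verified Lean document; each statement's English description precedes it below -/
import Mathlib

section
/- Let θ̄₀(x̄) be the unique root of θ − (1−δ)·Φ((x̄−θ)/σₓ) = 0, with δ ∈ (0,1) and σₓ > 0. Then θ̄₀ is differentiable with derivative dθ̄₀/dx̄ = [((1−δ)/σₓ)·φ((θ̄₀−x̄)/σₓ)] / [1 + ((1−δ)/σₓ)·φ((θ̄₀−x̄)/σₓ)], which is strictly between 0 and 1. -/
open Real Filter Set

/-- Standard normal probability density function. -/
noncomputable def stdPdf (t : ℝ) : ℝ := (Real.sqrt (2 * Real.pi))⁻¹ * Real.exp (-(t ^ 2) / 2)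

/-- Standard normal cumulative distribution function. -/
noncomputable def stdCdf (x : ℝ) : ℝ := ∫ t in Set.Iic x, stdPdf t

lemma stdPdf_pos (t : ℝ) : 0 < stdPdf t := by
  have h : 0 < Real.sqrt (2 * Real.pi) := Real.sqrt_pos.2 (by positivity)
  exact mul_pos (inv_pos.2 h) (Real.exp_pos _)

lemma stdPdf_integrable : MeasureTheory.Integrable stdPdf := by
  have : MeasureTheory.Integrable (fun t : ℝ => Real.exp (-(1/2 : ℝ) * t ^ 2)) :=
    integrable_exp_neg_mul_sq (by norm_num)
  have h2 : stdPdf = fun t => (Real.sqrt (2 * Real.pi))⁻¹ * Real.exp (-(1/2 : ℝ) * t ^ 2) := by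
    funext t; unfold stdPdf; ring_nf
  rw [h2]
  exact this.const_mul _

lemma stdPdf_continuous : Continuous stdPdf := by
  unfold stdPdf
  continuity

lemma hasDerivAt_stdCdf (x : ℝ) : HasDerivAt stdCdf (stdPdf x) x := by
  have hint : MeasureTheory.Integrable stdPdf := stdPdf_integrable
  have key : ∀ y : ℝ, stdCdf y = stdCdf 0 + ∫ t in (0:ℝ)..y, stdPdf t := by
    intro y
    have := intervalIntegral.integral_Iic_sub_Iic (μ := MeasureTheory.volume)
      (f := stdPdf) (a := (0:ℝ)) (b := y) hint.integrableOn hint.integrableOn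
    unfold stdCdf
    linarith [this]
  have h1 : HasDerivAt (fun y => stdCdf 0 + ∫ t in (0:ℝ)..y, stdPdf t) (stdPdf x) x := by
    have := intervalIntegral.integral_hasDerivAt_right (f := stdPdf) (a := (0:ℝ)) (b := x)
      (hint.intervalIntegrable)
      (stdPdf_continuous.aestronglyMeasurable.stronglyMeasurableAtFilter)
      (stdPdf_continuous.continuousAt)
    have h := (hasDerivAt_const x (stdCdf 0)).add this
    rw [zero_add] at h
    exact h
  have : (fun y => stdCdf 0 + ∫ t in (0:ℝ)..y, stdPdf t) = stdCdf := by
    funext y; exact (key y).symm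
  rwa [this] at h1

lemma stdPdf_neg (t : ℝ) : stdPdf (-t) = stdPdf t := by
  simp [stdPdf, neg_sq]

lemma stdCdf_monotone : Monotone stdCdf := by
  intro a b hab
  unfold stdCdf
  apply MeasureTheory.setIntegral_mono_set stdPdf_integrable.integrableOn
  · exact Filter.Eventually.of_forall fun t => (stdPdf_pos t).le
  · exact HasSubset.Subset.eventuallyLE (Iic_subset_Iic.2 hab)

/-- θ̄₀ is differentiable with the stated derivative, which lies strictly in (0,1). -/
theorem stmt3 (δ σx : ℝ) (hδ0 : 0 < δ) (hδ1 : δ < 1) (hσx : 0 < σx)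
    (θ0 : ℝ → ℝ)
    (hroot : ∀ xbar : ℝ, θ0 xbar - (1 - δ) * stdCdf ((xbar - θ0 xbar) / σx) = 0)
    (xbar : ℝ) :
    HasDerivAt θ0
      (((1 - δ) / σx * stdPdf ((θ0 xbar - xbar) / σx)) /
        (1 + (1 - δ) / σx * stdPdf ((θ0 xbar - xbar) / σx))) xbar ∧
    0 < ((1 - δ) / σx * stdPdf ((θ0 xbar - xbar) / σx)) /
        (1 + (1 - δ) / σx * stdPdf ((θ0 xbar - xbar) / σx)) ∧
    ((1 - δ) / σx * stdPdf ((θ0 xbar - xbar) / σx)) /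
        (1 + (1 - δ) / σx * stdPdf ((θ0 xbar - xbar) / σx)) < 1 := by
  have hδ' : 0 < 1 - δ := by linarith
  set H : ℝ → ℝ := fun u => u + (1 - δ) * stdCdf (u / σx) with hH
  set g : ℝ → ℝ := fun x => x - θ0 x with hg
  -- H ∘ g = id
  have hHg : ∀ x, H (g x) = x := by
    intro x
    have := hroot x
    simp only [hH, hg]
    nlinarith [this]
  -- H strictly monotone
  have hHmono : StrictMono H := by
    intro a b hab
    have h1 : stdCdf (a / σx) ≤ stdCdf (b / σx) :=
      stdCdf_monotone (by gcongr)
    show a + (1 - δ) * stdCdf (a / σx) < b + (1 - δ) * stdCdf (b / σx)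
    nlinarith
  -- g injective, strictly monotone, surjective
  have hginj : Function.Injective g := by
    intro a b hab
    have := hHg a; rw [hab, hHg b] at this; exact this.symm
  have hgmono : Monotone g := by
    intro a b hab
    by_contra h
    push_neg at h
    have := hHmono h
    rw [hHg, hHg] at this
    exact absurd hab (not_le.2 this)
  have hgsurj : Function.Surjective g := by
    intro u
    refine ⟨H u, ?_⟩
    have : H (g (H u)) = H u := hHg (H u)
    exact hHmono.injective this
  have hgcont : Continuous g := hgmono.continuous_of_surjective hgsurj
  -- derivative of H at g xbar
  set u := g xbar with hu
  set p := stdPdf (u / σx) with hp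
  have hcdfder : HasDerivAt (fun v => stdCdf (v / σx)) (p * σx⁻¹) u := by
    have h1 : HasDerivAt (fun v : ℝ => v / σx) σx⁻¹ u := by
      simpa using (hasDerivAt_id u).div_const σx
    exact (hasDerivAt_stdCdf (u / σx)).comp u h1
  have hHder : HasDerivAt H (1 + (1 - δ) / σx * p) u := by
    have := (hasDerivAt_id u).add (hcdfder.const_mul (1 - δ))
    convert this using 1
    · rfl
    · rfl
    · rfl
    · ring
  have hppos : 0 < p := stdPdf_pos _
  have hden : (0:ℝ) < 1 + (1 - δ) / σx * p := by positivity
  have hgder : HasDerivAt g (1 + (1 - δ) / σx * p)⁻¹ xbar :=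
    HasDerivAt.of_local_left_inverse hgcont.continuousAt hHder (ne_of_gt hden)
      (Filter.Eventually.of_forall hHg)
  -- θ0 = id - g
  have hθeq : θ0 = fun x => x - g x := by funext x; simp [hg]
  have hθder : HasDerivAt θ0 (1 - (1 + (1 - δ) / σx * p)⁻¹) xbar := by
    rw [hθeq]
    exact (hasDerivAt_id xbar).sub hgder
  -- p equals stdPdf ((θ0 xbar - xbar)/σx) since pdf is even
  have hpeq : p = stdPdf ((θ0 xbar - xbar) / σx) := by
    have : (θ0 xbar - xbar) / σx = -(u / σx) := by
      simp [hu, hg]; ring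
    rw [this, stdPdf_neg]
  set c := (1 - δ) / σx * stdPdf ((θ0 xbar - xbar) / σx) with hc
  have hcp : c = (1 - δ) / σx * p := by rw [hc, hpeq]
  have hcpos : 0 < c := by rw [hcp]; positivity
  have hdeneq : (1 - (1 + c)⁻¹) = c / (1 + c) := by
    field_simp
    ring
  refine ⟨?_, ?_, ?_⟩
  · have : (1 - (1 + (1 - δ) / σx * p)⁻¹) = c / (1 + c) := by
      rw [← hdeneq, hcp]
    rwa [this] at hθder
  · exact div_pos hcpos (by linarith)
  · rw [div_lt_one (by linarith)]; linarith
end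

section
/- Suppose (1−δ)·σₓ < √(2π)·σ², with δ ∈ (0,1), σ > 0, σₓ > 0. Then for every x̄, the quantity dθ̄₀/dx̄ − σ²/(σ² + σₓ²) is strictly negative, where dθ̄₀/dx̄ = [((1−δ)/σₓ)·φ((θ̄₀(x̄)−x̄)/σₓ)] / [1 + ((1−δ)/σₓ)·φ((θ̄₀(x̄)−x̄)/σₓ)]. -/
open Real Filter Set

/-- Under Assumption 1, dθ̄₀/dx̄ − σ²/(σ²+σₓ²) < 0 for every x̄. -/
theorem stmt6 (δ σ σx : ℝ) (hδ0 : 0 < δ) (hδ1 : δ < 1) (hσ : 0 < σ) (hσx : 0 < σx)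
    (hA : (1 - δ) * σx < Real.sqrt (2 * Real.pi) * σ ^ 2)
    (θ0 : ℝ → ℝ)
    (hroot : ∀ xbar : ℝ, θ0 xbar - (1 - δ) * stdCdf ((xbar - θ0 xbar) / σx) = 0)
    (xbar : ℝ) :
    ((1 - δ) / σx * stdPdf ((θ0 xbar - xbar) / σx)) /
        (1 + (1 - δ) / σx * stdPdf ((θ0 xbar - xbar) / σx)) -
      σ ^ 2 / (σ ^ 2 + σx ^ 2) < 0 := by
  set t := (θ0 xbar - xbar) / σx with ht
  have hsq : (0:ℝ) < Real.sqrt (2 * Real.pi) := Real.sqrt_pos.2 (by positivity)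
  have hpdf_pos : 0 < stdPdf t := by unfold stdPdf; positivity
  have hpdf_le : stdPdf t ≤ (Real.sqrt (2 * Real.pi))⁻¹ := by
    unfold stdPdf
    have h1 : Real.exp (-(t ^ 2) / 2) ≤ 1 := by
      rw [Real.exp_le_one_iff]
      nlinarith [sq_nonneg t]
    nlinarith [inv_pos.2 hsq]
  have hinv : (Real.sqrt (2 * Real.pi))⁻¹ * Real.sqrt (2 * Real.pi) = 1 :=
    inv_mul_cancel₀ (ne_of_gt hsq)
  set a := (1 - δ) / σx * stdPdf t with ha
  have hapos : 0 < a := by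
    exact mul_pos (div_pos (by linarith) hσx) hpdf_pos
  have hkey : a * σx ^ 2 < σ ^ 2 := by
    have h2 : a * σx ^ 2 = (1 - δ) * σx * stdPdf t := by
      rw [ha, div_mul_eq_mul_div, div_mul_eq_mul_div, div_eq_iff (ne_of_gt hσx)]; ring
    rw [h2]
    have h3 : (1 - δ) * σx * stdPdf t ≤ (1 - δ) * σx * (Real.sqrt (2 * Real.pi))⁻¹ := by
      apply mul_le_mul_of_nonneg_left hpdf_le
      nlinarith
    have h4 : (1 - δ) * σx * (Real.sqrt (2 * Real.pi))⁻¹ < σ ^ 2 := by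
      nlinarith [inv_pos.2 hsq]
    linarith
  rw [sub_neg, div_lt_div_iff₀ (by linarith) (by positivity)]
  nlinarith
end
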